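/- If M is additionally even (M(x) = M(−x) for all x), then ∫_{0}^{2} x² M(x) dx = 1/3. -/

import Mathlib

open Real MeasureTheory Set

/-!
Fubini and a translation give `∫ w(x) M(x) dx = ∫ f(t) ∫ w(u - t) g(u) du dt`, so the first
two moments of `M` are polynomials in those of `f` and `g`. As `g = 1 - f` on `[-1, 1]`, writing
`a` and `b` for the first and second moments of `f`, the moments of `g` are `1`, `-a` and
`2/3 - b`; hence `∫ x M = -2a` and `∫ x² M = 2/3 + 2a²`. Evenness of `M` forces `∫ x M = 0`,
so `a = 0` and `∫ x² M = 2/3`, half of which lies over `[0, 2]`, again by evenness.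
-/

theorem MeasureTheory.Integrable.continuous_mul_of_forall_notMem_eq_zero {X : Type*}
    [TopologicalSpace X] [T2Space X] [MeasurableSpace X] [OpensMeasurableSpace X] {μ : Measure X}
    {w f : X → ℝ} {K : Set X} (hw : Continuous w) (hf : Integrable f μ) (hK : IsCompact K)
    (hfK : ∀ x ∉ K, f x = 0) : Integrable (fun x => w x * f x) μ :=
  (hf.integrableOn.continuousOn_mul hw.continuousOn hK).integrable_of_forall_notMem_eq_zero
    fun x hx => by rw [hfK x hx, mul_zero]

theorem intervalIntegral_eq_integral_of_forall_notMem_eq_zero {f : ℝ → ℝ} {a b : ℝ}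
    (hab : a ≤ b) (hf : ∀ x ∉ Icc a b, f x = 0) : ∫ x in a..b, f x = ∫ x, f x := by
  rw [intervalIntegral.integral_of_le hab, ← integral_Icc_eq_integral_Ioc,
    setIntegral_eq_integral_of_forall_compl_eq_zero hf]

theorem integrable_of_intervalIntegral_ne_zero {f : ℝ → ℝ} {a b : ℝ}
    (hf : ∀ x ∉ Icc a b, f x = 0) (h : ∫ x in a..b, f x ≠ 0) : Integrable f := by
  have hIoc := (intervalIntegral.intervalIntegrable_of_integral_ne_zero h).1
  exact ((integrableOn_Icc_iff_integrableOn_Ioc (f := f)).mpr hIoc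
    ).integrable_of_forall_notMem_eq_zero hf

theorem integral_id_mul_eq_zero_of_even {M : ℝ → ℝ} (hM : ∀ x, M (-x) = M x) :
    ∫ x, x * M x = 0 := by
  have h := integral_neg_eq_self (fun x => x * M x) volume
  simp only [hM, neg_mul, integral_neg] at h
  linarith

theorem intervalIntegral_zero_eq_half_integral_of_even {h : ℝ → ℝ} {c : ℝ} (hc : 0 ≤ c)
    (hh : Integrable h) (heven : ∀ x, h (-x) = h x) (h0 : ∀ x ∉ Icc (-c) c, h x = 0) :
    ∫ x in (0:ℝ)..c, h x = (∫ x, h x) / 2 := by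
  have hneg : ∫ x in (0:ℝ)..c, h x = ∫ x in (-c)..0, h x := by
    simpa [heven] using intervalIntegral.integral_comp_neg (a := 0) (b := c) h
  have hsplit := intervalIntegral.integral_add_adjacent_intervals (b := 0)
    (hh.intervalIntegrable (a := -c)) (hh.intervalIntegrable (b := c))
  rw [intervalIntegral_eq_integral_of_forall_notMem_eq_zero (by linarith) h0] at hsplit
  linarith

noncomputable def crossCorrelation (f g : ℝ → ℝ) (x : ℝ) : ℝ :=
  ∫ t, f t * g (x + t)

section CrossCorrelation

variable {f g : ℝ → ℝ}

theorem integral_mul_crossCorrelation (w : ℝ → ℝ)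
    (h : Integrable (fun p : ℝ × ℝ => w p.1 * (f p.2 * g (p.1 + p.2))) (volume.prod volume)) :
    ∫ x, w x * crossCorrelation f g x = ∫ t, f t * ∫ u, w (u - t) * g u :=
  calc ∫ x, w x * crossCorrelation f g x = ∫ x, ∫ t, w x * (f t * g (x + t)) := by
        simp only [crossCorrelation, integral_const_mul]
    _ = ∫ t, ∫ x, w x * (f t * g (x + t)) := integral_integral_swap h
    _ = ∫ t, f t * ∫ x, w x * g (x + t) := by
        congr 1 with t
        rw [← integral_const_mul]
        simp only [mul_left_comm]
    _ = ∫ t, f t * ∫ u, w (u - t) * g u := by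
        congr 1 with t
        rw [← integral_add_right_eq_self (fun u => w (u - t) * g u) t]
        simp only [add_sub_cancel_right]

theorem integrable_mul_crossCorrelation_integrand (hf : Integrable f) (hg : Integrable g)
    (hf0 : ∀ x ∉ Icc (-1:ℝ) 1, f x = 0) (hg0 : ∀ x ∉ Icc (-1:ℝ) 1, g x = 0)
    {w : ℝ → ℝ} (hw : Continuous w) :
    Integrable (fun p : ℝ × ℝ => w p.1 * (f p.2 * g (p.1 + p.2))) (volume.prod volume) := by
  -- in the coordinates `(t, u) = (t, t + x)` the support is the compact square `[-1, 1]²`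
  have hprod : Integrable (fun q : ℝ × ℝ => w (q.2 - q.1) * (f q.1 * g q.2))
      (volume.prod volume) := by
    refine Integrable.continuous_mul_of_forall_notMem_eq_zero
      (K := Icc (-1:ℝ) 1 ×ˢ Icc (-1:ℝ) 1) (by fun_prop) (hf.mul_prod hg)
      (isCompact_Icc.prod isCompact_Icc) fun q hq => ?_
    rcases not_and_or.mp (mem_prod.not.mp hq) with h | h
    · rw [hf0 _ h, zero_mul]
    · rw [hg0 _ h, mul_zero]
  have := (measurePreserving_prod_add_swap volume volume).integrable_comp_of_integrable hprod
  simpa [Function.comp_def, add_comm] using this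

theorem integrable_mul_crossCorrelation (hf : Integrable f) (hg : Integrable g)
    (hf0 : ∀ x ∉ Icc (-1:ℝ) 1, f x = 0) (hg0 : ∀ x ∉ Icc (-1:ℝ) 1, g x = 0)
    {w : ℝ → ℝ} (hw : Continuous w) :
    Integrable (fun x => w x * crossCorrelation f g x) := by
  simpa only [crossCorrelation, integral_const_mul] using
    (integrable_mul_crossCorrelation_integrand hf hg hf0 hg0 hw).integral_prod_left

theorem crossCorrelation_eq_zero_of_notMem (hf0 : ∀ x ∉ Icc (-1:ℝ) 1, f x = 0)
    (hg0 : ∀ x ∉ Icc (-1:ℝ) 1, g x = 0) {x : ℝ} (hx : x ∉ Icc (-2:ℝ) 2) :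
    crossCorrelation f g x = 0 := by
  refine integral_eq_zero_of_ae (Filter.Eventually.of_forall fun t => ?_)
  by_cases ht : t ∈ Icc (-1:ℝ) 1
  · have hxt : x + t ∉ Icc (-1:ℝ) 1 := by
      simp only [mem_Icc, not_and_or, not_le] at hx ht ⊢
      rcases hx with hx | hx
      · exact Or.inl (by linarith [ht.2])
      · exact Or.inr (by linarith [ht.1])
    simp [hg0 _ hxt]
  · simp [hf0 _ ht]

theorem integral_quadratic_mul {φ : ℝ → ℝ} (hφ : Integrable φ)
    (hφ0 : ∀ x ∉ Icc (-1:ℝ) 1, φ x = 0) (a b c : ℝ) :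
    ∫ u, (a + b * u + c * u ^ 2) * φ u
      = a * (∫ u, φ u) + b * (∫ u, u * φ u) + c * ∫ u, u ^ 2 * φ u := by
  have h1 := hφ.continuous_mul_of_forall_notMem_eq_zero (w := fun u => u) continuous_id
    isCompact_Icc hφ0
  have h2 := hφ.continuous_mul_of_forall_notMem_eq_zero (continuous_pow 2) isCompact_Icc hφ0
  simp only [add_mul, mul_assoc]
  rw [integral_add (by fun_prop) (by fun_prop), integral_add (by fun_prop) (by fun_prop),
    integral_const_mul, integral_const_mul, integral_const_mul]

theorem integral_id_mul_crossCorrelation (hf : Integrable f) (hg : Integrable g)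
    (hf0 : ∀ x ∉ Icc (-1:ℝ) 1, f x = 0) (hg0 : ∀ x ∉ Icc (-1:ℝ) 1, g x = 0) :
    ∫ x, x * crossCorrelation f g x
      = (∫ u, u * g u) * (∫ t, f t) - (∫ t, t * f t) * ∫ u, g u := by
  rw [integral_mul_crossCorrelation _
    (integrable_mul_crossCorrelation_integrand hf hg hf0 hg0 (w := fun x => x) continuous_id)]
  have inner : ∀ t, ∫ u, (u - t) * g u = ∫ u, (-t + 1 * u + 0 * u ^ 2) * g u := fun t => by
    congr 1 with u; ring
  simp only [inner, integral_quadratic_mul hg hg0]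
  set G := ∫ u, g u
  set B := ∫ u, u * g u
  calc _ = ∫ t, (B + -G * t + 0 * t ^ 2) * f t := by congr 1 with t; ring
    _ = _ := by rw [integral_quadratic_mul hf hf0]; ring

theorem integral_sq_mul_crossCorrelation (hf : Integrable f) (hg : Integrable g)
    (hf0 : ∀ x ∉ Icc (-1:ℝ) 1, f x = 0) (hg0 : ∀ x ∉ Icc (-1:ℝ) 1, g x = 0) :
    ∫ x, x ^ 2 * crossCorrelation f g x
      = (∫ u, u ^ 2 * g u) * (∫ t, f t) - 2 * (∫ t, t * f t) * (∫ u, u * g u)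
        + (∫ t, t ^ 2 * f t) * ∫ u, g u := by
  rw [integral_mul_crossCorrelation _
    (integrable_mul_crossCorrelation_integrand hf hg hf0 hg0 (continuous_pow 2))]
  have inner : ∀ t, ∫ u, (u - t) ^ 2 * g u = ∫ u, (t ^ 2 + -2 * t * u + 1 * u ^ 2) * g u :=
    fun t => by congr 1 with u; ring
  simp only [inner, integral_quadratic_mul hg hg0]
  set G := ∫ u, g u
  set B := ∫ u, u * g u
  set C := ∫ u, u ^ 2 * g u
  calc _ = ∫ t, (C + -2 * B * t + G * t ^ 2) * f t := by congr 1 with t; ring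
    _ = _ := by rw [integral_quadratic_mul hf hf0]; ring

end CrossCorrelation

theorem forall_notMem_eq_zero_of_eq_indicator_one_sub {f g : ℝ → ℝ}
    (hg : g = (Icc (-1:ℝ) 1).indicator (fun x => 1 - f x)) :
    ∀ x ∉ Icc (-1:ℝ) 1, g x = 0 :=
  fun x hx => by rw [hg, indicator_of_notMem hx]

theorem integrable_of_eq_indicator_one_sub {f g : ℝ → ℝ} (hf : Integrable f)
    (hg : g = (Icc (-1:ℝ) 1).indicator (fun x => 1 - f x)) : Integrable g := by
  rw [hg]
  exact (continuous_const.integrableOn_Icc.sub hf.integrableOn).integrable_indicator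
    measurableSet_Icc

theorem integral_mul_of_eq_indicator_one_sub {f g w : ℝ → ℝ} (hf : Integrable f)
    (hf0 : ∀ x ∉ Icc (-1:ℝ) 1, f x = 0)
    (hg : g = (Icc (-1:ℝ) 1).indicator (fun x => 1 - f x))
    (hw : Continuous w) :
    ∫ x, w x * g x = (∫ x in (-1:ℝ)..1, w x) - ∫ x, w x * f x := by
  have hwf := hf.continuous_mul_of_forall_notMem_eq_zero hw isCompact_Icc hf0
  simp only [hg, ← indicator_mul_right, mul_one_sub]
  rw [integral_indicator measurableSet_Icc, integral_sub hw.integrableOn_Icc hwf.integrableOn,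
    setIntegral_eq_integral_of_forall_compl_eq_zero (f := fun x => w x * f x)
      fun x hx => by rw [hf0 x hx, mul_zero],
    integral_Icc_eq_integral_Ioc, ← intervalIntegral.integral_of_le (by norm_num)]

theorem integral_of_eq_indicator_one_sub {f g : ℝ → ℝ} (hf : Integrable f)
    (hf0 : ∀ x ∉ Icc (-1:ℝ) 1, f x = 0)
    (hg : g = (Icc (-1:ℝ) 1).indicator (fun x => 1 - f x)) :
    ∫ x, g x = 2 - ∫ x, f x := by
  simpa [one_add_one_eq_two] using
    integral_mul_of_eq_indicator_one_sub hf hf0 hg continuous_const (w := fun _ => 1)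

theorem integral_id_mul_of_eq_indicator_one_sub {f g : ℝ → ℝ} (hf : Integrable f)
    (hf0 : ∀ x ∉ Icc (-1:ℝ) 1, f x = 0)
    (hg : g = (Icc (-1:ℝ) 1).indicator (fun x => 1 - f x)) :
    ∫ u, u * g u = -∫ t, t * f t := by
  simpa using integral_mul_of_eq_indicator_one_sub hf hf0 hg continuous_id

theorem integral_sq_mul_of_eq_indicator_one_sub {f g : ℝ → ℝ} (hf : Integrable f)
    (hf0 : ∀ x ∉ Icc (-1:ℝ) 1, f x = 0)
    (hg : g = (Icc (-1:ℝ) 1).indicator (fun x => 1 - f x)) :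
    ∫ u, u ^ 2 * g u = 2 / 3 - ∫ t, t ^ 2 * f t := by
  have h := integral_mul_of_eq_indicator_one_sub hf hf0 hg (continuous_pow 2)
  norm_num [integral_pow] at h
  exact h

theorem integral_id_mul_crossCorrelation_of_eq_indicator_one_sub {f g : ℝ → ℝ}
    (hf : Integrable f) (hf0 : ∀ x ∉ Icc (-1:ℝ) 1, f x = 0) (hf1 : ∫ x, f x = 1)
    (hg : g = (Icc (-1:ℝ) 1).indicator (fun x => 1 - f x)) :
    ∫ x, x * crossCorrelation f g x = -2 * ∫ t, t * f t := by
  rw [integral_id_mul_crossCorrelation hf (integrable_of_eq_indicator_one_sub hf hg) hf0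
    (forall_notMem_eq_zero_of_eq_indicator_one_sub hg),
    integral_id_mul_of_eq_indicator_one_sub hf hf0 hg,
    integral_of_eq_indicator_one_sub hf hf0 hg, hf1]
  ring

theorem integral_sq_mul_crossCorrelation_of_eq_indicator_one_sub {f g : ℝ → ℝ}
    (hf : Integrable f) (hf0 : ∀ x ∉ Icc (-1:ℝ) 1, f x = 0) (hf1 : ∫ x, f x = 1)
    (hg : g = (Icc (-1:ℝ) 1).indicator (fun x => 1 - f x)) :
    ∫ x, x ^ 2 * crossCorrelation f g x = 2 / 3 + 2 * (∫ t, t * f t) ^ 2 := by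
  rw [integral_sq_mul_crossCorrelation hf (integrable_of_eq_indicator_one_sub hf hg) hf0
    (forall_notMem_eq_zero_of_eq_indicator_one_sub hg),
    integral_id_mul_of_eq_indicator_one_sub hf hf0 hg,
    integral_sq_mul_of_eq_indicator_one_sub hf hf0 hg,
    integral_of_eq_indicator_one_sub hf hf0 hg, hf1]
  ring

theorem even_M_second_moment_general (f g M : ℝ → ℝ)
    (hf_supp : ∀ x, x ∉ Icc (-1:ℝ) 1 → f x = 0)
    (hf_int : ∫ x in (-1:ℝ)..1, f x = 1)
    (hg : ∀ x, g x = if x ∈ Icc (-1:ℝ) 1 then 1 - f x else 0)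
    (hM : ∀ x, M x = ∫ t in (-1:ℝ)..1, f t * g (x + t))
    (hMeven : ∀ x, M x = M (-x)) :
    ∫ x in (0:ℝ)..2, x^2 * M x = 1/3 := by
  -- the Bochner integral of a non-integrable function is `0`, so `hf_int` forces integrability
  have hf : Integrable f := integrable_of_intervalIntegral_ne_zero hf_supp (by simp [hf_int])
  have hf_mass : ∫ t, f t = 1 := by
    rwa [← intervalIntegral_eq_integral_of_forall_notMem_eq_zero (by norm_num) hf_supp]
  have hg_ind : g = (Icc (-1:ℝ) 1).indicator (fun x => 1 - f x) :=
    funext fun x => by rw [hg, indicator_apply]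
  have hM_eq : M = crossCorrelation f g := funext fun x => by
    rw [hM, intervalIntegral_eq_integral_of_forall_notMem_eq_zero (by norm_num)
      fun t ht => by rw [hf_supp t ht, zero_mul]]
    rfl
  have hf_mean : ∫ t, t * f t = 0 := by
    have h := integral_id_mul_eq_zero_of_even (M := M) fun x => (hMeven x).symm
    rw [hM_eq, integral_id_mul_crossCorrelation_of_eq_indicator_one_sub hf hf_supp hf_mass
      hg_ind] at h
    linarith
  have hg_supp := forall_notMem_eq_zero_of_eq_indicator_one_sub hg_ind
  have h_int : Integrable (fun x => x ^ 2 * M x) := hM_eq ▸ integrable_mul_crossCorrelation hf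
    (integrable_of_eq_indicator_one_sub hf hg_ind) hf_supp hg_supp (continuous_pow 2)
  rw [intervalIntegral_zero_eq_half_integral_of_even zero_le_two h_int
    (fun x => by rw [neg_sq, ← hMeven])
    (fun x hx => by rw [hM_eq, crossCorrelation_eq_zero_of_notMem hf_supp hg_supp hx, mul_zero]),
    hM_eq, integral_sq_mul_crossCorrelation_of_eq_indicator_one_sub hf hf_supp hf_mass hg_ind,
    hf_mean]
  norm_num

theorem even_M_second_moment (f g M : ℝ → ℝ)
    (hf_meas : Measurable f)
    (hf01 : ∀ x ∈ Icc (-1:ℝ) 1, 0 ≤ f x ∧ f x ≤ 1)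
    (hf_supp : ∀ x, x ∉ Icc (-1:ℝ) 1 → f x = 0)
    (hf_int : ∫ x in (-1:ℝ)..1, f x = 1)
    (hg : ∀ x, g x = if x ∈ Icc (-1:ℝ) 1 then 1 - f x else 0)
    (hM : ∀ x, M x = ∫ t in (-1:ℝ)..1, f t * g (x + t))
    (hMeven : ∀ x, M x = M (-x)) :
    ∫ x in (0:ℝ)..2, x^2 * M x = 1/3 :=
  even_M_second_moment_general f g M hf_supp hf_int hg hM hMeven
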